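/- Let ε be a real number with 0 < ε < √2 − 1, and let Z be a nonnegative real-valued random variable with finite second moment satisfying σ²[Z] ≤ E[Z]. If E[Z] ≥ 2·pivot(ε), then P(Z < thresh(ε)) ≤ 1/29.67. -/

import Mathlib

open MeasureTheory ProbabilityTheory

/-!
Write `m = E[Z]` and `t = m - thresh ε`. Cantelli's inequality gives
`P(Z ≤ m - t) ≤ σ²/(σ² + t²) ≤ m/(m + t²)`, as `σ² ≤ m`. From `m ≥ 2·pivot ε` one gets
`t ≥ m/(2(1+ε))`, hence `t² ≥ m · m/(4(1+ε)²) ≥ m · 4.92/ε²`, and `ε < √2 - 1` makes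
`4.92/ε² ≥ 28.67`, so `m/(m + t²) ≤ 1/29.67`.
-/

/-- `pivot ε = 9.84·(1 + 1/ε)²`. -/
noncomputable def pivot (ε : ℝ) : ℝ := 9.84 * (1 + 1 / ε) ^ 2

/-- `thresh ε = 9.84·(1 + ε/(1+ε))·(1 + 1/ε)²`. -/
noncomputable def thresh (ε : ℝ) : ℝ := 9.84 * (1 + ε / (1 + ε)) * (1 + 1 / ε) ^ 2

section Cantelli

variable {Ω : Type*} [MeasurableSpace Ω] {μ : Measure Ω} [IsProbabilityMeasure μ] {X : Ω → ℝ}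

lemma integral_sub_const_sq (hX : MemLp X 2 μ) (c : ℝ) :
    ∫ ω, (X ω - c) ^ 2 ∂μ = Var[X; μ] + (μ[X] - c) ^ 2 := by
  have hXc : MemLp (fun ω ↦ X ω - c) 2 μ := hX.sub (memLp_const c)
  have h := variance_eq_sub hXc
  rw [variance_sub_const hX.aestronglyMeasurable,
    integral_sub (hX.integrable one_le_two) (integrable_const c), integral_const] at h
  simp only [Pi.pow_apply, probReal_univ, smul_eq_mul, one_mul] at h
  linarith

/-- **Cantelli's inequality**. -/
theorem measureReal_le_integral_sub_le_variance_div (hX : MemLp X 2 μ) {t : ℝ} (ht : 0 < t) :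
    μ.real {ω | X ω ≤ μ[X] - t} ≤ Var[X; μ] / (Var[X; μ] + t ^ 2) := by
  set m := μ[X]
  set v := Var[X; μ]
  have hv : 0 ≤ v := variance_nonneg X μ
  -- Markov's inequality for `(X - (m + λ))²` with the optimal shift `λ = v / t`.
  set lam := v / t
  have hlam : 0 ≤ lam := div_nonneg hv ht.le
  have hsub : {ω | X ω ≤ m - t} ⊆ {ω | (t + lam) ^ 2 ≤ (X ω - (m + lam)) ^ 2} := by
    intro ω hω
    simp only [Set.mem_ofPred_eq] at hω ⊢
    nlinarith
  have hmarkov := mul_meas_ge_le_integral_of_nonneg (μ := μ)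
    (Filter.Eventually.of_forall fun ω ↦ sq_nonneg (X ω - (m + lam)))
    (hX.sub (memLp_const (m + lam))).integrable_sq ((t + lam) ^ 2)
  rw [integral_sub_const_sq hX, show m - (m + lam) = -lam by ring, neg_sq] at hmarkov
  have hopt : (v + lam ^ 2) / (t + lam) ^ 2 = v / (v + t ^ 2) := by
    simp only [lam]
    field_simp
    ring
  calc μ.real {ω | X ω ≤ m - t}
      ≤ μ.real {ω | (t + lam) ^ 2 ≤ (X ω - (m + lam)) ^ 2} := measureReal_mono hsub
    _ ≤ (v + lam ^ 2) / (t + lam) ^ 2 := by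
      rw [le_div_iff₀ (by positivity), mul_comm]; exact hmarkov
    _ = v / (v + t ^ 2) := hopt

theorem measureReal_le_integral_sub_le_integral_div (hX : MemLp X 2 μ) (hvar : Var[X; μ] ≤ μ[X])
    {t : ℝ} (ht : 0 < t) :
    μ.real {ω | X ω ≤ μ[X] - t} ≤ μ[X] / (μ[X] + t ^ 2) := by
  have hv := variance_nonneg X μ
  have hm : 0 ≤ μ[X] := hv.trans hvar
  calc μ.real {ω | X ω ≤ μ[X] - t} ≤ Var[X; μ] / (Var[X; μ] + t ^ 2) :=
        measureReal_le_integral_sub_le_variance_div hX ht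
    _ ≤ μ[X] / (μ[X] + t ^ 2) := by
        rw [div_le_div_iff₀ (by positivity) (by positivity)]
        nlinarith

end Cantelli

lemma pivot_pos {ε : ℝ} (hε : 0 < ε) : 0 < pivot ε := by
  unfold pivot; positivity

lemma pivot_eq {ε : ℝ} (hε : ε ≠ 0) : pivot ε = 9.84 * (1 + ε) ^ 2 / ε ^ 2 := by
  unfold pivot; field_simp; ring

lemma thresh_eq {ε : ℝ} (hε : 0 < ε) : thresh ε = pivot ε * (1 + 2 * ε) / (1 + ε) := by
  unfold thresh pivot; field_simp; ring

lemma div_two_mul_one_add_le_sub_thresh {ε m : ℝ} (hε : 0 < ε) (hm : 2 * pivot ε ≤ m) :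
    m / (2 * (1 + ε)) ≤ m - thresh ε := by
  rw [thresh_eq hε, div_le_iff₀ (by positivity)]
  have : (m - pivot ε * (1 + 2 * ε) / (1 + ε)) * (2 * (1 + ε))
      = m * (2 * (1 + ε)) - 2 * pivot ε * (1 + 2 * ε) := by
    field_simp
  rw [this]
  nlinarith

-- `(√2 - 1)² = 3 - 2√2 ≈ 0.171573`, just below `4.92 / 28.67 ≈ 0.171608`.
lemma mul_sq_lt_of_lt_sqrt_two_sub_one {ε : ℝ} (h0 : 0 < ε) (h : ε < √2 - 1) :
    28.67 * ε ^ 2 < 4.92 := by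
  have hsqrt : √2 < 1.414214 := by
    rw [Real.sqrt_lt' (by norm_num)]; norm_num
  nlinarith

lemma mul_le_sq_sub_thresh {ε m : ℝ} (h0 : 0 < ε) (h : ε < √2 - 1) (hm : 2 * pivot ε ≤ m) :
    28.67 * m ≤ (m - thresh ε) ^ 2 := by
  have hm0 : 0 < m := by linarith [pivot_pos h0]
  have hmε : 19.68 * (1 + ε) ^ 2 ≤ m * ε ^ 2 := by
    rw [pivot_eq h0.ne', mul_div_assoc', div_le_iff₀ (by positivity)] at hm
    linarith
  have hε := mul_sq_lt_of_lt_sqrt_two_sub_one h0 h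
  calc 28.67 * m ≤ (m / (2 * (1 + ε))) ^ 2 := by
        rw [div_pow, le_div_iff₀ (by positivity)]
        nlinarith
    _ ≤ (m - thresh ε) ^ 2 := by
        gcongr
        exact div_two_mul_one_add_le_sub_thresh h0 hm

theorem stmt_16_general {Ω : Type*} [MeasurableSpace Ω] (μ : Measure Ω) [IsProbabilityMeasure μ]
    (ε : ℝ) (hlo : 0 < ε) (hhi : ε < Real.sqrt 2 - 1)
    (Z : Ω → ℝ) (hL2 : MemLp Z 2 μ)
    (hvar : variance Z μ ≤ ∫ x, Z x ∂μ)
    (hE : 2 * pivot ε ≤ ∫ x, Z x ∂μ) :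
    (μ {ω | Z ω < thresh ε}).toReal ≤ 1 / 29.67 := by
  set m := ∫ x, Z x ∂μ
  set t := m - thresh ε
  have hm : 0 < m := by linarith [pivot_pos hlo]
  have ht : 0 < t := (div_pos hm (by positivity)).trans_le (div_two_mul_one_add_le_sub_thresh hlo hE)
  have hsub : {ω | Z ω < thresh ε} ⊆ {ω | Z ω ≤ m - t} := fun ω hω ↦ by
    simp only [Set.mem_ofPred_eq, t, sub_sub_cancel] at hω ⊢
    exact hω.le
  calc μ.real {ω | Z ω < thresh ε} ≤ μ.real {ω | Z ω ≤ m - t} := measureReal_mono hsub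
    _ ≤ m / (m + t ^ 2) := measureReal_le_integral_sub_le_integral_div hL2 hvar ht
    _ ≤ 1 / 29.67 := by
        rw [div_le_div_iff₀ (by positivity) (by norm_num)]
        linarith [mul_le_sq_sub_thresh hlo hhi hE]

theorem stmt_16 {Ω : Type*} [MeasurableSpace Ω] (μ : Measure Ω) [IsProbabilityMeasure μ]
    (ε : ℝ) (hlo : 0 < ε) (hhi : ε < Real.sqrt 2 - 1)
    (Z : Ω → ℝ) (hZnonneg : ∀ ω, 0 ≤ Z ω) (hL2 : MemLp Z 2 μ)
    (hvar : variance Z μ ≤ ∫ x, Z x ∂μ)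
    (hE : 2 * pivot ε ≤ ∫ x, Z x ∂μ) :
    (μ {ω | Z ω < thresh ε}).toReal ≤ 1 / 29.67 :=
  stmt_16_general μ ε hlo hhi Z hL2 hvar hE
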